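/- arXiv:2210.06148 — 2 statements merged into one kernel-verified Lean document; each statement's English description precedes it below -/
import Mathlib

section
/- Conditional on Z_1,…,Z_{d−1}, when x > g* + ε the conditional probability P'_ε = Pr{|g(Z_d) − x| ≤ ε | Z_1,…,Z_{d−1}} satisfies P'_ε / (2ε) ≤ 1/√(γ_{1d} π |x − g*|) for every ε > 0 (with P'_ε interpreted as 0 when x ≤ g* + ε). -/
open MeasureTheory ProbabilityTheory Filter Set Topology

noncomputable section

/-- The standard normal density `φ`. -/
def stdNormalPDF (z : ℝ) : ℝ := Real.exp (-z ^ 2 / 2) / Real.sqrt (2 * Real.pi)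

/-- `ξ₁ = c₁ + Σ_{j=1}^{d−1} (δ_{1j} Z_j + γ_{1j} Z_j²)` as a function of the values
`zv` of `Z_1, …, Z_{d−1}` (0-indexed: coordinates `0, …, d−2`). -/
def xi1 (c1 : ℝ) (δ1 γ1 : ℕ → ℝ) (d : ℕ) (zv : ℕ → ℝ) : ℝ :=
  c1 + ∑ j ∈ Finset.range (d - 1), (δ1 j * zv j + γ1 j * zv j ^ 2)

/-- The quadratic `g(t) = ξ₁ + δ_{1d} t + γ_{1d} t²`. -/
def gfun (c1 : ℝ) (δ1 γ1 : ℕ → ℝ) (d : ℕ) (zv : ℕ → ℝ) (t : ℝ) : ℝ :=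
  xi1 c1 δ1 γ1 d zv + δ1 (d - 1) * t + γ1 (d - 1) * t ^ 2

/-- `g* = min_t g(t) = ξ₁ − δ_{1d}²/(4γ_{1d})`. -/
def gstar (c1 : ℝ) (δ1 γ1 : ℕ → ℝ) (d : ℕ) (zv : ℕ → ℝ) : ℝ :=
  xi1 c1 δ1 γ1 d zv - δ1 (d - 1) ^ 2 / (4 * γ1 (d - 1))

/-- `λ = √(δ_{1d}² + 4γ_{1d}(x − ξ₁)) = |g'(r₁)| = |g'(r₂)|`. -/
def lamb (c1 : ℝ) (δ1 γ1 : ℕ → ℝ) (d : ℕ) (x : ℝ) (zv : ℕ → ℝ) : ℝ :=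
  Real.sqrt (δ1 (d - 1) ^ 2 + 4 * γ1 (d - 1) * (x - xi1 c1 δ1 γ1 d zv))

/-- The smaller root `r₁` of `g(t) = x` (when `x > g*`). -/
def root1 (c1 : ℝ) (δ1 γ1 : ℕ → ℝ) (d : ℕ) (x : ℝ) (zv : ℕ → ℝ) : ℝ :=
  (-δ1 (d - 1) - lamb c1 δ1 γ1 d x zv) / (2 * γ1 (d - 1))

/-- The larger root `r₂` of `g(t) = x` (when `x > g*`). -/
def root2 (c1 : ℝ) (δ1 γ1 : ℕ → ℝ) (d : ℕ) (x : ℝ) (zv : ℕ → ℝ) : ℝ :=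
  (-δ1 (d - 1) + lamb c1 δ1 γ1 d x zv) / (2 * γ1 (d - 1))

/-- `q₁ = φ(r₁)/λ` when `x > g*`, and `q₁ = 0` when `x ≤ g*`. -/
def qwt1 (c1 : ℝ) (δ1 γ1 : ℕ → ℝ) (d : ℕ) (x : ℝ) (zv : ℕ → ℝ) : ℝ :=
  if gstar c1 δ1 γ1 d zv < x then stdNormalPDF (root1 c1 δ1 γ1 d x zv) / lamb c1 δ1 γ1 d x zv
  else 0

/-- `q₂ = φ(r₂)/λ` when `x > g*`, and `q₂ = 0` when `x ≤ g*`. -/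
def qwt2 (c1 : ℝ) (δ1 γ1 : ℕ → ℝ) (d : ℕ) (x : ℝ) (zv : ℕ → ℝ) : ℝ :=
  if gstar c1 δ1 γ1 d zv < x then stdNormalPDF (root2 c1 δ1 γ1 d x zv) / lamb c1 δ1 γ1 d x zv
  else 0

/-!
Completing the square, `|g(Z_d) − x| ≤ ε` says that `y = Z_d + δ_{1d}/(2γ_{1d})` satisfies
`(a − ε)/γ ≤ y² ≤ (a + ε)/γ`, where `a = x − g*` and `γ = γ_{1d}`. That is two intervals of total
length `2(√((a + ε)/γ) − √((a − ε)/γ))`, which concavity of the square root bounds by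
`2ε √2 / √(γ a)`, and the standard normal density is at most `1/√(2π)`.
-/

open Real
open scoped NNReal ENNReal

lemma sqrt_sub_sqrt_le_div_sqrt_add {u v : ℝ} (hu : 0 ≤ u) (huv : u ≤ v) :
    √v - √u ≤ (v - u) / √(u + v) := by
  rcases (add_nonneg hu (hu.trans huv)).eq_or_lt with h0 | hpos
  · obtain rfl : u = 0 := by linarith
    obtain rfl : v = 0 := by linarith
    simp
  have hsum : √(u + v) ≤ √u + √v :=
    sqrt_le_iff.2 ⟨by positivity, by
      nlinarith [sq_sqrt hu, sq_sqrt (hu.trans huv), mul_nonneg (sqrt_nonneg u) (sqrt_nonneg v)]⟩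
  rw [le_div_iff₀ (sqrt_pos.2 hpos)]
  calc (√v - √u) * √(u + v) ≤ (√v - √u) * (√u + √v) :=
        mul_le_mul_of_nonneg_left hsum (sub_nonneg.2 (sqrt_le_sqrt huv))
    _ = v - u := by nlinarith [sq_sqrt hu, sq_sqrt (hu.trans huv)]

lemma volume_setOf_sq_mem_Icc_le {u v : ℝ} (huv : u ≤ v) :
    volume {y : ℝ | y ^ 2 ∈ Icc u v} ≤ ENNReal.ofReal (2 * (√v - √u)) := by
  have hlen : 0 ≤ √v - √u := sub_nonneg.2 (sqrt_le_sqrt huv)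
  have hsub : {y : ℝ | y ^ 2 ∈ Icc u v} ⊆ Icc (-√v) (-√u) ∪ Icc (√u) (√v) := by
    rintro y ⟨hlo, hhi⟩
    have hlo' : √u ≤ |y| := sqrt_sq_eq_abs y ▸ sqrt_le_sqrt hlo
    have hhi' : |y| ≤ √v := sqrt_sq_eq_abs y ▸ sqrt_le_sqrt hhi
    rcases le_or_gt 0 y with hy | hy
    · rw [abs_of_nonneg hy] at hlo' hhi'
      exact Or.inr ⟨hlo', hhi'⟩
    · rw [abs_of_neg hy] at hlo' hhi'
      exact Or.inl ⟨by linarith, by linarith⟩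
  calc volume {y : ℝ | y ^ 2 ∈ Icc u v}
      ≤ volume (Icc (-√v) (-√u)) + volume (Icc (√u) (√v)) :=
        (measure_mono hsub).trans (measure_union_le _ _)
    _ = ENNReal.ofReal (2 * (√v - √u)) := by
        rw [Real.volume_Icc, Real.volume_Icc, ← ENNReal.ofReal_add (by linarith) hlen]
        ring_nf

lemma gaussianPDFReal_le (μ : ℝ) (v : ℝ≥0) (x : ℝ) :
    gaussianPDFReal μ v x ≤ (√(2 * π * v))⁻¹ := by
  rw [gaussianPDFReal_def]
  refine mul_le_of_le_one_right (by positivity) (exp_le_one_iff.2 ?_)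
  exact div_nonpos_of_nonpos_of_nonneg (neg_nonpos.2 (sq_nonneg _)) (by positivity)

lemma gaussianReal_le_mul_volume (μ : ℝ) {v : ℝ≥0} (hv : v ≠ 0) (s : Set ℝ) :
    gaussianReal μ v s ≤ ENNReal.ofReal (√(2 * π * v))⁻¹ * volume s := by
  rw [gaussianReal_apply μ hv, ← setLIntegral_const]
  exact lintegral_mono fun x ↦ ENNReal.ofReal_le_ofReal (gaussianPDFReal_le μ v x)

lemma toReal_gaussianReal_quadratic_band_le {γ a ε : ℝ} (c : ℝ) (hγ : 0 < γ) (hε : 0 < ε)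
    (hεa : ε ≤ a) :
    (gaussianReal 0 1 {t | |γ * (t + c) ^ 2 - a| ≤ ε}).toReal ≤ 2 * ε / √(γ * π * a) := by
  set u := (a - ε) / γ
  set v := (a + ε) / γ
  have hu : 0 ≤ u := div_nonneg (by linarith) hγ.le
  have huv : u ≤ v := div_le_div_of_nonneg_right (by linarith) hγ.le
  have hband : {t | |γ * (t + c) ^ 2 - a| ≤ ε} = (· + c) ⁻¹' {y : ℝ | y ^ 2 ∈ Icc u v} := by
    ext t
    simp only [mem_ofPred_eq, mem_preimage, mem_Icc, abs_le, u, v, div_le_iff₀ hγ,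
      le_div_iff₀ hγ]
    constructor <;> rintro ⟨h₁, h₂⟩ <;> constructor <;> linarith
  have hmeasure : gaussianReal 0 1 {t | |γ * (t + c) ^ 2 - a| ≤ ε}
      ≤ ENNReal.ofReal ((√(2 * π))⁻¹ * (2 * (√v - √u))) := by
    rw [hband, ENNReal.ofReal_mul (by positivity)]
    calc gaussianReal 0 1 ((· + c) ⁻¹' {y : ℝ | y ^ 2 ∈ Icc u v})
        ≤ ENNReal.ofReal (√(2 * π * (1 : ℝ≥0)))⁻¹ * volume {y : ℝ | y ^ 2 ∈ Icc u v} := by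
          rw [← measure_preimage_add_right volume c]
          exact gaussianReal_le_mul_volume 0 one_ne_zero _
      _ ≤ _ := by
          rw [NNReal.coe_one, mul_one]
          gcongr
          exact volume_setOf_sq_mem_Icc_le huv
  have ha : 0 < a := hε.trans_le hεa
  have hsum : u + v = 2 * a / γ := by simp only [u, v]; ring
  have hdiff : v - u = 2 * ε / γ := by simp only [u, v]; ring
  have hscale : √(2 * π) * √(2 * a / γ) * γ = 2 * √(γ * π * a) := by
    refine (sq_eq_sq₀ (by positivity) (by positivity)).1 ?_
    rw [mul_pow, mul_pow, mul_pow, sq_sqrt (by positivity), sq_sqrt (by positivity),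
      sq_sqrt (by positivity)]
    field_simp
  calc (gaussianReal 0 1 {t | |γ * (t + c) ^ 2 - a| ≤ ε}).toReal
      ≤ (√(2 * π))⁻¹ * (2 * (√v - √u)) := ENNReal.toReal_le_of_le_ofReal
        (by have := sub_nonneg.2 (sqrt_le_sqrt huv); positivity) hmeasure
    _ ≤ (√(2 * π))⁻¹ * (2 * ((v - u) / √(u + v))) := by
        gcongr; exact sqrt_sub_sqrt_le_div_sqrt_add hu huv
    _ = 2 * ε / √(γ * π * a) := by
        have : 0 < √(2 * a / γ) := by positivity
        rw [hsum, hdiff, show √(γ * π * a) = √(2 * π) * √(2 * a / γ) * γ / 2 by linarith]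
        field_simp

lemma gfun_eq_gstar_add (c1 : ℝ) (δ1 γ1 : ℕ → ℝ) (d : ℕ) (zv : ℕ → ℝ) (hγ : γ1 (d - 1) ≠ 0)
    (t : ℝ) :
    gfun c1 δ1 γ1 d zv t
      = gstar c1 δ1 γ1 d zv + γ1 (d - 1) * (t + δ1 (d - 1) / (2 * γ1 (d - 1))) ^ 2 := by
  unfold gfun gstar
  field_simp
  ring

theorem Pprime_bound_general
    (d : ℕ)
    (c1 : ℝ) (δ1 γ1 : ℕ → ℝ) (hγ : 0 < γ1 (d - 1))
    (x : ℝ) :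
    ∀ zv : ℕ → ℝ, ∀ ε > (0:ℝ),
      (if gstar c1 δ1 γ1 d zv + ε < x then
          (gaussianReal 0 1 {t | |gfun c1 δ1 γ1 d zv t - x| ≤ ε}).toReal
        else 0) / (2 * ε)
      ≤ 1 / Real.sqrt (γ1 (d - 1) * Real.pi * |x - gstar c1 δ1 γ1 d zv|) := by
  intro zv ε hε
  split_ifs with h
  · have hevent : {t | |gfun c1 δ1 γ1 d zv t - x| ≤ ε}
        = {t | |γ1 (d - 1) * (t + δ1 (d - 1) / (2 * γ1 (d - 1))) ^ 2
            - (x - gstar c1 δ1 γ1 d zv)| ≤ ε} := by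
      ext t
      rw [mem_ofPred_eq, mem_ofPred_eq, gfun_eq_gstar_add c1 δ1 γ1 d zv hγ.ne' t]
      ring_nf
    rw [hevent, abs_of_pos (by linarith), div_le_iff₀ (by positivity)]
    calc _ ≤ 2 * ε / √(γ1 (d - 1) * π * (x - gstar c1 δ1 γ1 d zv)) :=
          toReal_gaussianReal_quadratic_band_le _ hγ hε (by linarith)
      _ = _ := by ring
  · rw [zero_div]
    positivity

/-- Conditional on `Z_1, …, Z_{d−1}` (i.e. for any values `zv` of
these variables), when `x > g* + ε` the conditional probability
`P'_ε = Pr{|g(Z_d) − x| ≤ ε | Z_1, …, Z_{d−1}}` (interpreted as `0` when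
`x ≤ g* + ε`) satisfies `P'_ε / (2ε) ≤ 1/√(γ_{1d} π |x − g*|)` for every `ε > 0`. -/
theorem Pprime_bound
    (d : ℕ) (hd : 1 ≤ d)
    (c1 : ℝ) (δ1 γ1 : ℕ → ℝ) (hγ : 0 < γ1 (d - 1))
    (x : ℝ) :
    ∀ zv : ℕ → ℝ, ∀ ε > (0:ℝ),
      (if gstar c1 δ1 γ1 d zv + ε < x then
          (gaussianReal 0 1 {t | |gfun c1 δ1 γ1 d zv t - x| ≤ ε}).toReal
        else 0) / (2 * ε)
      ≤ 1 / Real.sqrt (γ1 (d - 1) * Real.pi * |x - gstar c1 δ1 γ1 d zv|) :=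
  Pprime_bound_general d c1 δ1 γ1 hγ x
end
end

section
/- Let X be normal with mean μ_x and variance σ_x² > 0, let Z be standard normal independent of X, let ξ = σ_y ( ρ (X − μ_x)/σ_x + √(1 − ρ²) Z ) with σ_y > 0 and |ρ| < 1, and let Y = δ X + (1/2) γ X² + ξ. Then for all α, β ∈ (0,1), VaR_α(X) = μ_x + Φ^{−1}(α) σ_x and CoVaR_{α,β} = δ VaR_α(X) + (1/2) γ VaR_α(X)² + σ_y [ ρ Φ^{−1}(α) + √(1 − ρ²) Φ^{−1}(β) ], where Φ^{−1} is the inverse of the standard normal cumulative distribution function. -/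
open MeasureTheory ProbabilityTheory Filter Set Topology

noncomputable section

/-- The standard normal cumulative distribution function `Φ`. -/
def stdNormalCDF (t : ℝ) : ℝ := (gaussianReal 0 1 (Iic t)).toReal

/-!
Since `(X - μx) / σx` is standard normal, `VaR_α(X)` is read off from `Φ`. Writing
`Y = g X + s Z` with `g` continuous and `s = σy √(1 - ρ²) > 0`, independence of `X` and `Z`
gives `P{Y ≤ c, X ∈ B} = ∫_B Φ((c - g x) / s) dP_X(x)`. The ratio defining CoVaR is therefore
the average of the continuous function `x ↦ Φ((c - g x) / s)` over the ball of radius `ε` around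
`VaR_α(X)`, so it tends to `Φ((c - g VaR_α(X)) / s)`, and `c` is recovered by strict
monotonicity of `Φ`.
-/

open Metric

namespace ProbabilityTheory

theorem continuous_cdf (μ : Measure ℝ) [IsProbabilityMeasure μ] [NullSingletonClass μ] :
    Continuous (cdf μ) := by
  refine continuous_iff_continuousAt.2 fun x => ?_
  rw [(monotone_cdf μ).continuousAt_iff_leftLim_eq_rightLim, (cdf μ).rightLim_eq]
  have hjump : ENNReal.ofReal (cdf μ x - Function.leftLim (cdf μ) x) = 0 := by
    rw [← (cdf μ).measure_singleton, measure_cdf, measure_singleton]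
  have := (monotone_cdf μ).leftLim_le (le_refl x)
  rw [ENNReal.ofReal_eq_zero] at hjump
  linarith

theorem strictMono_cdf (μ : Measure ℝ) [IsProbabilityMeasure μ] [μ.IsOpenPosMeasure] :
    StrictMono (cdf μ) := by
  intro t u htu
  have hpos : 0 < μ (Ioc t u) :=
    (isOpen_Ioo.measure_pos μ (nonempty_Ioo.2 htu)).trans_le (measure_mono Ioo_subset_Ioc_self)
  rw [← measure_cdf μ, (cdf μ).measure_Ioc, ENNReal.ofReal_pos] at hpos
  linarith

theorem HasLaw.of_map_eq {Ω 𝓧 : Type*} [MeasurableSpace Ω] [MeasurableSpace 𝓧] {P : Measure Ω}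
    {X : Ω → 𝓧} {μ : Measure 𝓧} [NeZero μ] (h : P.map X = μ) : HasLaw X μ P :=
  ⟨AEMeasurable.of_map_ne_zero (h ▸ NeZero.ne μ), h⟩

theorem map_gaussianReal_standardize (μ : ℝ) {σ : ℝ} (hσ : 0 < σ) :
    (gaussianReal μ (σ ^ 2).toNNReal).map (fun x => (x - μ) / σ) = gaussianReal 0 1 := by
  have : (fun x => (x - μ) / σ) = (· / σ) ∘ (· - μ) := rfl
  rw [this, ← Measure.map_map (by fun_prop) (by fun_prop), gaussianReal_map_sub_const,
    gaussianReal_map_div_const]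
  congr 1
  · simp
  · ext
    simp [Real.coe_toNNReal _ (sq_nonneg σ), hσ.ne']

theorem cdf_gaussianReal (μ : ℝ) {σ : ℝ} (hσ : 0 < σ) (t : ℝ) :
    cdf (gaussianReal μ (σ ^ 2).toNNReal) t = cdf (gaussianReal 0 1) ((t - μ) / σ) := by
  have hpre : (fun x => (x - μ) / σ) ⁻¹' Iic ((t - μ) / σ) = Iic t := by
    ext x
    simp [div_le_div_iff_of_pos_right hσ]
  rw [cdf_eq_real, cdf_eq_real, ← map_gaussianReal_standardize μ hσ,
    map_measureReal_apply (by fun_prop) measurableSet_Iic, hpre]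

theorem eq_add_mul_of_gaussianReal_Iic_eq {μ σ : ℝ} (hσ : 0 < σ) {v a : ℝ}
    (h : gaussianReal μ (σ ^ 2).toNNReal (Iic v) = ENNReal.ofReal (cdf (gaussianReal 0 1) a)) :
    v = μ + a * σ := by
  have := (gaussianReal_absolutelyContinuous' 0 one_ne_zero).isOpenPosMeasure
  rw [← ofReal_cdf, ENNReal.ofReal_eq_ofReal_iff (cdf_nonneg _ _) (cdf_nonneg _ _),
    cdf_gaussianReal μ hσ] at h
  have := (strictMono_cdf _).injective h
  field_simp at this
  linarith

theorem tendsto_setAverage_closedBall {α E : Type*} [PseudoMetricSpace α] [MeasurableSpace α]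
    [OpensMeasurableSpace α] [NormedAddCommGroup E] [NormedSpace ℝ E] [CompleteSpace E]
    {μ : Measure α} [IsFiniteMeasure μ] {f : α → E} {v : α} (hf : ContinuousAt f v)
    (hfi : Integrable f μ) (hμ : ∀ ε > 0, μ (closedBall v ε) ≠ 0) :
    Tendsto (fun ε => ⨍ x in closedBall v ε, f x ∂μ) (𝓝[>] 0) (𝓝 (f v)) := by
  rw [nhds_basis_closedBall.tendsto_right_iff]
  intro η hη
  obtain ⟨δ, hδ, hfδ⟩ := Metric.continuousAt_iff.1 hf η hη
  filter_upwards [Ioo_mem_nhdsGT hδ] with ε hε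
  refine (convex_closedBall _ _).set_average_mem isClosed_closedBall (hμ ε hε.1)
    (measure_ne_top _ _) ?_ hfi.integrableOn
  refine ae_restrict_of_forall_mem measurableSet_closedBall fun x hx => ?_
  exact (hfδ ((mem_closedBall.1 hx).trans_lt hε.2)).le

theorem IndepFun.measure_mem_and_le {Ω 𝓧 : Type*} [MeasurableSpace Ω] [MeasurableSpace 𝓧]
    {P : Measure Ω} [IsFiniteMeasure P] {X : Ω → 𝓧} {Z : Ω → ℝ} {μ : Measure 𝓧} {ν : Measure ℝ}
    (hX : HasLaw X μ P) (hZ : HasLaw Z ν P) (hXZ : X ⟂ᵢ[P] Z) {A : Set 𝓧} (hA : MeasurableSet A)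
    {k : 𝓧 → ℝ} (hk : Measurable k) :
    P {ω | X ω ∈ A ∧ Z ω ≤ k (X ω)} = ∫⁻ x in A, ν (Iic (k x)) ∂μ := by
  have : IsFiniteMeasure ν := hZ.map_eq ▸ inferInstance
  have hS : MeasurableSet {p : 𝓧 × ℝ | p.1 ∈ A ∧ p.2 ≤ k p.1} :=
    (measurable_fst hA).inter (measurableSet_le measurable_snd (hk.comp measurable_fst))
  rw [(hXZ.hasLaw_prod hX hZ).measure_eq hS, Measure.prod_apply hS, ← lintegral_indicator hA]
  refine lintegral_congr fun x => ?_
  by_cases hx : x ∈ A <;> simp [hx, Iic]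

theorem IndepFun.tendsto_cdf_add_mul_given_closedBall {Ω : Type*} [MeasurableSpace Ω]
    {P : Measure Ω} {X Z : Ω → ℝ} {μ ν : Measure ℝ} [IsProbabilityMeasure ν]
    (hX : HasLaw X μ P) (hZ : HasLaw Z ν P) (hXZ : X ⟂ᵢ[P] Z) {g : ℝ → ℝ} (hg : Measurable g)
    {v : ℝ} (hgv : ContinuousAt g v) {s : ℝ} (hs : 0 < s) (c : ℝ)
    (hν : ContinuousAt (cdf ν) ((c - g v) / s)) (hμ : ∀ ε > 0, μ (closedBall v ε) ≠ 0) :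
    Tendsto (fun ε => (P {ω | g (X ω) + s * Z ω ≤ c ∧ |X ω - v| ≤ ε}).toReal
        / (P {ω | |X ω - v| ≤ ε}).toReal) (𝓝[>] 0) (𝓝 (cdf ν ((c - g v) / s))) := by
  have := hZ.isProbabilityMeasure
  have : IsProbabilityMeasure μ := hX.map_eq ▸ Measure.isProbabilityMeasure_map hX.aemeasurable
  have hk : Measurable fun x => (c - g x) / s := (measurable_const.sub hg).div_const s
  have hh : Measurable fun x => cdf ν ((c - g x) / s) := (monotone_cdf ν).measurable.comp hk
  have hhi : Integrable (fun x => cdf ν ((c - g x) / s)) μ :=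
    .of_bound hh.aestronglyMeasurable 1 (ae_of_all _ fun x => by
      rw [Real.norm_of_nonneg (cdf_nonneg _ _)]; exact cdf_le_one _ _)
  have hcont : ContinuousAt (fun x => cdf ν ((c - g x) / s)) v :=
    hν.comp (f := fun x => (c - g x) / s) ((continuousAt_const.sub hgv).div_const s)
  refine (tendsto_setAverage_closedBall hcont hhi hμ).congr fun ε => ?_
  have hjoint : {ω | g (X ω) + s * Z ω ≤ c ∧ |X ω - v| ≤ ε}
      = {ω | X ω ∈ closedBall v ε ∧ Z ω ≤ (c - g (X ω)) / s} := by
    ext ω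
    simp only [mem_ofPred_eq, mem_closedBall, Real.dist_eq, le_div_iff₀ hs]
    exact ⟨fun ⟨h1, h2⟩ => ⟨h2, by linarith⟩, fun ⟨h1, h2⟩ => ⟨by linarith, h1⟩⟩
  have hnum : (P {ω | g (X ω) + s * Z ω ≤ c ∧ |X ω - v| ≤ ε}).toReal
      = ∫ x in closedBall v ε, cdf ν ((c - g x) / s) ∂μ := by
    rw [hjoint, hXZ.measure_mem_and_le hX hZ measurableSet_closedBall hk,
      integral_eq_lintegral_of_nonneg_ae (ae_of_all _ fun x => cdf_nonneg _ _)
        hh.aestronglyMeasurable]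
    simp_rw [ofReal_cdf]
  have hden : P {ω | |X ω - v| ≤ ε} = μ (closedBall v ε) :=
    hX.measure_eq (p := fun x => |x - v| ≤ ε) measurableSet_closedBall
  rw [setAverage_eq, hnum, hden, smul_eq_mul, div_eq_inv_mul, Measure.real]

end ProbabilityTheory

theorem stdNormalCDF_eq_cdf : stdNormalCDF = cdf (gaussianReal 0 1) := by
  ext t
  rw [cdf_eq_real]
  rfl

theorem covar_nonlinear_portfolio_general
    {Ω : Type*} [MeasurableSpace Ω] (P : Measure Ω)
    (X Z : Ω → ℝ)
    (μx σx σy ρ δ γ : ℝ) (hσx : 0 < σx) (hσy : 0 < σy) (hρ : |ρ| < 1)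
    (hXlaw : Measure.map X P = gaussianReal μx (σx ^ 2).toNNReal)
    (hZlaw : Measure.map Z P = gaussianReal 0 1)
    (hindep : IndepFun X Z P)
    (Y : Ω → ℝ)
    (hY : ∀ ω, Y ω = δ * X ω + 1 / 2 * γ * X ω ^ 2
      + σy * (ρ * (X ω - μx) / σx + Real.sqrt (1 - ρ ^ 2) * Z ω))
    (α β : ℝ)
    (a b : ℝ) (ha : stdNormalCDF a = α) (hb : stdNormalCDF b = β)
    -- `vα = VaR_α(X)`
    (vα : ℝ) (hvα : P {ω | X ω ≤ vα} = ENNReal.ofReal α)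
    -- `c = CoVaR_{α,β}`: the `β`-quantile of the conditional distribution of `Y`
    -- given `X = vα`
    (c : ℝ)
    (hc : Tendsto
      (fun ε : ℝ => (P {ω | Y ω ≤ c ∧ |X ω - vα| ≤ ε}).toReal
        / (P {ω | |X ω - vα| ≤ ε}).toReal)
      (𝓝[>] 0) (𝓝 β)) :
    vα = μx + a * σx
    ∧ c = δ * vα + 1 / 2 * γ * vα ^ 2
        + σy * (ρ * a + Real.sqrt (1 - ρ ^ 2) * b) := by
  have hXlaw' := HasLaw.of_map_eq hXlaw
  have hZlaw' := HasLaw.of_map_eq hZlaw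
  rw [stdNormalCDF_eq_cdf] at ha hb
  have hVaR : vα = μx + a * σx := eq_add_mul_of_gaussianReal_Iic_eq hσx <|
    (hXlaw'.measure_eq (p := (· ≤ vα)) measurableSet_Iic).symm.trans (ha ▸ hvα)
  refine ⟨hVaR, ?_⟩
  have hs : 0 < σy * √(1 - ρ ^ 2) :=
    mul_pos hσy (Real.sqrt_pos.2 (sub_pos.2 (sq_lt_one_iff_abs_lt_one ρ |>.2 hρ)))
  set g : ℝ → ℝ := fun x => δ * x + 1 / 2 * γ * x ^ 2 + σy * (ρ * (x - μx) / σx) with hg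
  have hYg : Y = fun ω => g (X ω) + σy * √(1 - ρ ^ 2) * Z ω := funext fun ω => by rw [hY]; ring
  subst hYg
  have hvne : (σx ^ 2).toNNReal ≠ 0 := (Real.toNNReal_pos.2 (by positivity)).ne'
  have := (gaussianReal_absolutelyContinuous' μx hvne).isOpenPosMeasure
  have := (gaussianReal_absolutelyContinuous' 0 one_ne_zero).isOpenPosMeasure
  have := nullSingletonClass_gaussianReal (μ := 0) one_ne_zero
  have hlim := hindep.tendsto_cdf_add_mul_given_closedBall hXlaw' hZlaw' (by fun_prop)
    (by fun_prop : ContinuousAt g vα) hs c (continuous_cdf _).continuousAt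
    (fun ε hε => (measure_closedBall_pos _ _ hε).ne')
  have hcb := (strictMono_cdf _).injective (hb.trans (tendsto_nhds_unique hc hlim))
  rw [eq_div_iff hs.ne'] at hcb
  subst hVaR
  have hstd : ρ * (μx + a * σx - μx) / σx = ρ * a := by field_simp; ring
  simp only [hg, hstd] at hcb
  linear_combination -hcb

/-- Let `X` be normal with mean `μx` and variance `σx² > 0`, `Z`
standard normal independent of `X`, `ξ = σy (ρ (X − μx)/σx + √(1−ρ²) Z)` with
`σy > 0`, `|ρ| < 1`, and `Y = δ X + (1/2) γ X² + ξ`. Then for all `α, β ∈ (0,1)`: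
`VaR_α(X) = μx + Φ⁻¹(α) σx` and
`CoVaR_{α,β} = δ VaR_α(X) + (1/2) γ VaR_α(X)² + σy (ρ Φ⁻¹(α) + √(1−ρ²) Φ⁻¹(β))`.
Here `vα = VaR_α(X)` satisfies `Pr{X ≤ vα} = α`, and `c = CoVaR_{α,β}` is the
`β`-quantile of the conditional distribution of `Y` given `X = vα`, defined through
`Pr{Y ≤ c | X = vα} = lim_{ε→0} Pr{Y ≤ c, |X − vα| ≤ ε}/Pr{|X − vα| ≤ ε} = β`, and
`Φ⁻¹(α) = a`, `Φ⁻¹(β) = b` are characterized by `Φ(a) = α`, `Φ(b) = β`. -/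
theorem covar_nonlinear_portfolio
    {Ω : Type*} [MeasurableSpace Ω] (P : Measure Ω) [IsProbabilityMeasure P]
    (X Z : Ω → ℝ) (hX : Measurable X) (hZ : Measurable Z)
    (μx σx σy ρ δ γ : ℝ) (hσx : 0 < σx) (hσy : 0 < σy) (hρ : |ρ| < 1)
    (hXlaw : Measure.map X P = gaussianReal μx (σx ^ 2).toNNReal)
    (hZlaw : Measure.map Z P = gaussianReal 0 1)
    (hindep : IndepFun X Z P)
    (Y : Ω → ℝ)
    (hY : ∀ ω, Y ω = δ * X ω + 1 / 2 * γ * X ω ^ 2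
      + σy * (ρ * (X ω - μx) / σx + Real.sqrt (1 - ρ ^ 2) * Z ω))
    (α β : ℝ) (hα : α ∈ Ioo (0:ℝ) 1) (hβ : β ∈ Ioo (0:ℝ) 1)
    (a b : ℝ) (ha : stdNormalCDF a = α) (hb : stdNormalCDF b = β)
    -- `vα = VaR_α(X)`
    (vα : ℝ) (hvα : P {ω | X ω ≤ vα} = ENNReal.ofReal α)
    -- `c = CoVaR_{α,β}`: the `β`-quantile of the conditional distribution of `Y`
    -- given `X = vα`
    (c : ℝ)
    (hc : Tendsto
      (fun ε : ℝ => (P {ω | Y ω ≤ c ∧ |X ω - vα| ≤ ε}).toReal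
        / (P {ω | |X ω - vα| ≤ ε}).toReal)
      (𝓝[>] 0) (𝓝 β)) :
    vα = μx + a * σx
    ∧ c = δ * vα + 1 / 2 * γ * vα ^ 2
        + σy * (ρ * a + Real.sqrt (1 - ρ ^ 2) * b) :=
  covar_nonlinear_portfolio_general P X Z μx σx σy ρ δ γ hσx hσy hρ hXlaw hZlaw hindep Y hY α β a b
    ha hb vα hvα c hc
end
end
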